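/- Let Ω be a locally compact Hausdorff space and Γ a nondegenerate Banach module over C₀(Ω). Then Γ satisfies the AM-identity if and only if Γ admits a U₀(Ω)-valued norm. Moreover, if Γ satisfies the AM-identity, then the map N given by N(s)(x) = inf{‖f•s‖ : f ∈ C₀(Ω) real-valued, f ≥ 0, f(x) = 1} (for s ∈ Γ, x ∈ Ω) is a U₀(Ω)-valued norm on Γ. -/

import Mathlib

open scoped ZeroAtInfty

noncomputable section

variable {𝕜 : Type*} [RCLike 𝕜] {Ω : Type*} [TopologicalSpace Ω]

/-- A Banach module structure over `C₀(Ω, 𝕜)` on a `𝕜`-Banach space `Γ`. -/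
structure C0Module (𝕜 : Type*) [RCLike 𝕜] (Ω : Type*) [TopologicalSpace Ω]
    (Γ : Type*) [NormedAddCommGroup Γ] [NormedSpace 𝕜 Γ] where
  smul : C₀(Ω, 𝕜) →L[𝕜] Γ →L[𝕜] Γ
  mul_smul : ∀ (f g : C₀(Ω, 𝕜)) (s : Γ), smul (f * g) s = smul f (smul g s)
  norm_smul_le : ∀ (f : C₀(Ω, 𝕜)) (s : Γ), ‖smul f s‖ ≤ ‖f‖ * ‖s‖

variable {Γ : Type*} [NormedAddCommGroup Γ] [NormedSpace 𝕜 Γ]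

/-- Nondegeneracy of a Banach module over `C₀(Ω, 𝕜)`. -/
def C0Module.Nondegenerate (M : C0Module 𝕜 Ω Γ) : Prop :=
  Dense (Submodule.span 𝕜 {x : Γ | ∃ (f : C₀(Ω, 𝕜)) (s : Γ), M.smul f s = x} : Set Γ)

/-- The inclusion `C₀(Ω, ℝ) ⊆ C₀(Ω, 𝕜)`. -/
def ofRealC0 (𝕜 : Type*) [RCLike 𝕜] {Ω : Type*} [TopologicalSpace Ω] (f : C₀(Ω, ℝ)) :
    C₀(Ω, 𝕜) where
  toFun := fun x => (f x : 𝕜)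
  continuous_toFun := RCLike.continuous_ofReal.comp f.continuous
  zero_at_infty' := by
    have h2 : Filter.Tendsto (fun r : ℝ => (r : 𝕜)) (nhds 0) (nhds 0) := by
      simpa using (RCLike.continuous_ofReal (K := 𝕜)).tendsto 0
    exact h2.comp f.zero_at_infty'

/-- The pointwise maximum of two functions in `C₀(Ω, ℝ)`. -/
def supC0 (f g : C₀(Ω, ℝ)) : C₀(Ω, ℝ) where
  toFun := fun x => max (f x) (g x)
  continuous_toFun := f.continuous.max g.continuous
  zero_at_infty' := by simpa using f.zero_at_infty'.max g.zero_at_infty'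

/-- The AM-identity: `‖(f₁ ⊔ f₂) • s‖ = max ‖f₁ • s‖ ‖f₂ • s‖` for nonnegative real-valued
`f₁, f₂ ∈ C₀(Ω, ℝ)`. -/
def C0Module.IsAM (M : C0Module 𝕜 Ω Γ) : Prop :=
  ∀ (f₁ f₂ : C₀(Ω, ℝ)), (∀ x, 0 ≤ f₁ x) → (∀ x, 0 ≤ f₂ x) → ∀ s : Γ,
    ‖M.smul (ofRealC0 𝕜 (supC0 f₁ f₂)) s‖ =
      max ‖M.smul (ofRealC0 𝕜 f₁) s‖ ‖M.smul (ofRealC0 𝕜 f₂) s‖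

/-- A `U₀(Ω)`-valued norm on a Banach module `Γ` over `C₀(Ω, 𝕜)`. -/
structure IsU0Norm (M : C0Module 𝕜 Ω Γ) (N : Γ → Ω → ℝ) : Prop where
  nonneg : ∀ (s : Γ) (x : Ω), 0 ≤ N s x
  upperSemicontinuous : ∀ s : Γ, UpperSemicontinuous (N s)
  zero_at_infty : ∀ s : Γ, ∀ ε > 0, ∃ K : Set Ω, IsCompact K ∧ ∀ x ∉ K, N s x ≤ ε
  sup_eq_norm : ∀ s : Γ, (⨆ x : Ω, N s x) = ‖s‖
  smul_eq : ∀ (f : C₀(Ω, 𝕜)) (s : Γ) (x : Ω), N (M.smul f s) x = ‖f x‖ * N s x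
  subadd : ∀ (s₁ s₂ : Γ) (x : Ω), N (s₁ + s₂) x ≤ N s₁ x + N s₂ x

/-- The canonical candidate for the `U₀(Ω)`-valued norm. -/
def normFormula (M : C0Module 𝕜 Ω Γ) (s : Γ) (x : Ω) : ℝ :=
  sInf {r : ℝ | ∃ f : C₀(Ω, ℝ), (∀ y, 0 ≤ f y) ∧ f x = 1 ∧ r = ‖M.smul (ofRealC0 𝕜 f) s‖}


section Aux

open Filter Set Topology ZeroAtInftyContinuousMap

variable {M : C0Module 𝕜 Ω Γ}

lemma ofRealC0_apply' (f : C₀(Ω, ℝ)) (x : Ω) : ofRealC0 𝕜 f x = (f x : 𝕜) := rfl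

lemma ofRealC0_mul (f g : C₀(Ω, ℝ)) :
    ofRealC0 𝕜 (f * g) = ofRealC0 𝕜 f * ofRealC0 𝕜 g := by
  ext x
  simp [ofRealC0_apply', ZeroAtInftyContinuousMap.coe_mul]

lemma ofRealC0_smulr (r : ℝ) (f : C₀(Ω, ℝ)) :
    ofRealC0 𝕜 (r • f) = (r : 𝕜) • ofRealC0 𝕜 f := by
  ext x
  simp [ofRealC0_apply', ZeroAtInftyContinuousMap.coe_smul]

lemma ofRealC0_zero : ofRealC0 𝕜 (0 : C₀(Ω, ℝ)) = 0 := by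
  ext x; simp [ofRealC0_apply']

lemma ofRealC0_add (f g : C₀(Ω, ℝ)) :
    ofRealC0 𝕜 (f + g) = ofRealC0 𝕜 f + ofRealC0 𝕜 g := by
  ext x; simp [ofRealC0_apply', ZeroAtInftyContinuousMap.coe_add]

lemma ofRealC0_sub (f g : C₀(Ω, ℝ)) :
    ofRealC0 𝕜 (f - g) = ofRealC0 𝕜 f - ofRealC0 𝕜 g := by
  ext x; simp [ofRealC0_apply', ZeroAtInftyContinuousMap.coe_sub]

lemma normC0_apply_le (F : C₀(Ω, 𝕜)) (x : Ω) : ‖F x‖ ≤ ‖F‖ := by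
  rw [← ZeroAtInftyContinuousMap.norm_toBCF_eq_norm]
  exact F.toBCF.norm_coe_le_norm x

lemma normC0_le {F : C₀(Ω, 𝕜)} {C : ℝ} (hC : 0 ≤ C) (h : ∀ x, ‖F x‖ ≤ C) : ‖F‖ ≤ C := by
  rw [← ZeroAtInftyContinuousMap.norm_toBCF_eq_norm]
  exact (BoundedContinuousFunction.norm_le hC).2 h

lemma norm_ofRealC0_le {f : C₀(Ω, ℝ)} {C : ℝ} (hC : 0 ≤ C) (h : ∀ x, |f x| ≤ C) :
    ‖ofRealC0 𝕜 f‖ ≤ C :=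
  normC0_le hC fun x => by simpa [ofRealC0_apply', RCLike.norm_ofReal] using h x

lemma norm_ofRealC0_le_one {f : C₀(Ω, ℝ)} (h0 : ∀ x, 0 ≤ f x) (h1 : ∀ x, f x ≤ 1) :
    ‖ofRealC0 𝕜 f‖ ≤ 1 :=
  norm_ofRealC0_le zero_le_one fun x => abs_le.2 ⟨by linarith [h0 x], h1 x⟩

/-- Urysohn-type lemma packaged in `C₀`. -/
lemma exists_c0_urysohn [LocallyCompactSpace Ω] [T2Space Ω] {K U : Set Ω}
    (hK : IsCompact K) (hU : IsOpen U) (hKU : K ⊆ U) :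
    ∃ f : C₀(Ω, ℝ), (∀ y, 0 ≤ f y) ∧ (∀ y, f y ≤ 1) ∧ (∀ y ∈ K, f y = 1) ∧
      (∀ y ∉ U, f y = 0) ∧ HasCompactSupport ⇑f := by
  obtain ⟨g, hg1, hg0, hgc, hg01⟩ :=
    exists_continuous_one_zero_of_isCompact hK hU.isClosed_compl
      (Set.disjoint_left.2 fun x hx hx' => hx' (hKU hx))
  have hz : Tendsto ⇑g (cocompact Ω) (𝓝 0) := by
    apply Tendsto.congr' _ tendsto_const_nhds
    have hmem : (tsupport ⇑g)ᶜ ∈ cocompact Ω := mem_cocompact.2 ⟨tsupport ⇑g, hgc, le_rfl⟩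
    filter_upwards [hmem] with y hy
    exact (image_eq_zero_of_notMem_tsupport hy).symm
  refine ⟨⟨g, hz⟩, fun y => (hg01 y).1, fun y => (hg01 y).2, fun y hy => hg1 hy,
    fun y hy => hg0 hy, hgc⟩

lemma smul_add_fun (a b : C₀(Ω, 𝕜)) (s : Γ) :
    M.smul (a + b) s = M.smul a s + M.smul b s := by rw [map_add]; rfl

lemma smul_sub_fun (a b : C₀(Ω, 𝕜)) (s : Γ) :
    M.smul (a - b) s = M.smul a s - M.smul b s := by rw [map_sub]; rfl

lemma smul_smul_fun (c : 𝕜) (a : C₀(Ω, 𝕜)) (s : Γ) :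
    M.smul (c • a) s = c • M.smul a s := by rw [map_smul]; rfl

lemma smul_zero_fun (s : Γ) : M.smul (0 : C₀(Ω, 𝕜)) s = 0 := by rw [map_zero]; rfl

/-- Monotonicity from the AM identity. -/
lemma am_mono (hAM : M.IsAM) {f g : C₀(Ω, ℝ)} (hf : ∀ y, 0 ≤ f y) (hg : ∀ y, 0 ≤ g y)
    (hfg : ∀ y, f y ≤ g y) (s : Γ) :
    ‖M.smul (ofRealC0 𝕜 f) s‖ ≤ ‖M.smul (ofRealC0 𝕜 g) s‖ := by
  have h : supC0 f g = g := by
    ext y; exact max_eq_right (hfg y)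
  have := hAM f g hf hg s
  rw [h] at this
  rw [this]
  exact le_max_left _ _

lemma normFormula_bddBelow (M : C0Module 𝕜 Ω Γ) (s : Γ) (x : Ω) :
    BddBelow {r : ℝ | ∃ f : C₀(Ω, ℝ), (∀ y, 0 ≤ f y) ∧ f x = 1 ∧
      r = ‖M.smul (ofRealC0 𝕜 f) s‖} :=
  ⟨0, by rintro r ⟨f, -, -, rfl⟩; exact norm_nonneg _⟩

lemma normFormula_nonneg (M : C0Module 𝕜 Ω Γ) (s : Γ) (x : Ω) : 0 ≤ normFormula M s x :=
  Real.sInf_nonneg (by rintro r ⟨f, -, -, rfl⟩; exact norm_nonneg _)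

lemma normFormula_le (M : C0Module 𝕜 Ω Γ) (s : Γ) {x : Ω} {f : C₀(Ω, ℝ)}
    (hf : ∀ y, 0 ≤ f y) (hx : f x = 1) :
    normFormula M s x ≤ ‖M.smul (ofRealC0 𝕜 f) s‖ :=
  csInf_le (normFormula_bddBelow M s x) ⟨f, hf, hx, rfl⟩

lemma exists_normFormula_lt [LocallyCompactSpace Ω] [T2Space Ω]
    (M : C0Module 𝕜 Ω Γ) (s : Γ) (x : Ω) {c : ℝ} (hc : normFormula M s x < c) :
    ∃ f : C₀(Ω, ℝ), (∀ y, 0 ≤ f y) ∧ f x = 1 ∧ ‖M.smul (ofRealC0 𝕜 f) s‖ < c := by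
  obtain ⟨f, hf0, -, hf1, -, -⟩ :=
    exists_c0_urysohn (isCompact_singleton (x := x)) isOpen_univ (subset_univ _)
  have hne : {r : ℝ | ∃ f : C₀(Ω, ℝ), (∀ y, 0 ≤ f y) ∧ f x = 1 ∧
      r = ‖M.smul (ofRealC0 𝕜 f) s‖}.Nonempty :=
    ⟨_, f, hf0, hf1 x rfl, rfl⟩
  obtain ⟨r, ⟨g, hg0, hg1, rfl⟩, hr⟩ :=
    (csInf_lt_iff (normFormula_bddBelow M s x) hne).1 hc
  exact ⟨g, hg0, hg1, hr⟩

lemma normFormula_le_norm [LocallyCompactSpace Ω] [T2Space Ω]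
    (M : C0Module 𝕜 Ω Γ) (s : Γ) (x : Ω) : normFormula M s x ≤ ‖s‖ := by
  obtain ⟨f, hf0, hf1', hf1, -, -⟩ :=
    exists_c0_urysohn (isCompact_singleton (x := x)) isOpen_univ (subset_univ _)
  refine (normFormula_le M s hf0 (hf1 x rfl)).trans ?_
  calc ‖M.smul (ofRealC0 𝕜 f) s‖ ≤ ‖ofRealC0 𝕜 f‖ * ‖s‖ := M.norm_smul_le _ _
    _ ≤ 1 * ‖s‖ := by
        gcongr
        exact norm_ofRealC0_le_one hf0 hf1'
    _ = ‖s‖ := one_mul _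

end Aux

section Aux2

open Filter Set Topology ZeroAtInftyContinuousMap

variable {M : C0Module 𝕜 Ω Γ}

/-- Pointwise perturbation estimate: if `h` vanishes where `f` is `δ`-far from `f x`. -/
lemma norm_mul_sub_const_smul_le (f : C₀(Ω, 𝕜)) (h : C₀(Ω, ℝ)) (x : Ω) {δ C : ℝ}
    (hδ : 0 ≤ δ) (hC : 0 ≤ C) (hCb : ∀ y, |h y| ≤ C)
    (hsupp : ∀ y, h y ≠ 0 → ‖f y - f x‖ ≤ δ) :
    ‖ofRealC0 𝕜 h * f - f x • ofRealC0 𝕜 h‖ ≤ C * δ := by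
  apply normC0_le (by positivity)
  intro y
  have hy' : (ofRealC0 𝕜 h * f - f x • ofRealC0 𝕜 h) y = (h y : 𝕜) * (f y - f x) := by
    simp only [ZeroAtInftyContinuousMap.coe_sub, Pi.sub_apply,
      ZeroAtInftyContinuousMap.coe_mul, Pi.mul_apply, ZeroAtInftyContinuousMap.coe_smul,
      Pi.smul_apply, smul_eq_mul, ofRealC0_apply']
    ring
  rw [hy', norm_mul, RCLike.norm_ofReal]
  by_cases hy : h y = 0
  · simp only [hy, abs_zero, zero_mul]; positivity
  · exact mul_le_mul (hCb y) (hsupp y hy) (norm_nonneg _) hC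

lemma normFormula_smul_le [LocallyCompactSpace Ω] [T2Space Ω]
    (M : C0Module 𝕜 Ω Γ) (f : C₀(Ω, 𝕜)) (s : Γ) (x : Ω) :
    normFormula M (M.smul f s) x ≤ ‖f x‖ * normFormula M s x := by
  refine le_of_forall_pos_le_add fun ε hε => ?_
  set ε₁ := ε / (2 * (‖f x‖ + 1)) with hε₁def
  have hε₁ : 0 < ε₁ := by positivity
  obtain ⟨g, hg0, hgx, hgs⟩ := exists_normFormula_lt M s x (lt_add_of_pos_right _ hε₁)
  set A := ‖ofRealC0 𝕜 g‖ with hAdef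
  have hA : 0 ≤ A := norm_nonneg _
  set δ := ε / (2 * (A + 1) * (‖s‖ + 1)) with hδdef
  have hδ : 0 < δ := by positivity
  have hUopen : IsOpen {y | ‖f y - f x‖ < δ} :=
    isOpen_lt ((f.continuous.sub continuous_const).norm) continuous_const
  obtain ⟨k, hk0, hk1, hkx, hkU, -⟩ :=
    exists_c0_urysohn (isCompact_singleton (x := x)) hUopen
      (singleton_subset_iff.2 (by simp [hδ]))
  set h := g * k with hhdef
  have hhy : ∀ y, h y = g y * k y := fun y => rfl
  have hh0 : ∀ y, 0 ≤ h y := fun y => mul_nonneg (hg0 y) (hk0 y)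
  have hhx : h x = 1 := by rw [hhy, hgx, hkx x rfl, one_mul]
  have step1 : normFormula M (M.smul f s) x ≤ ‖M.smul (ofRealC0 𝕜 h * f) s‖ := by
    rw [M.mul_smul]
    exact normFormula_le M _ hh0 hhx
  have hE : ‖ofRealC0 𝕜 h * f - f x • ofRealC0 𝕜 h‖ ≤ A * δ := by
    refine norm_mul_sub_const_smul_le f h x hδ.le hA (fun y => ?_) (fun y hy => ?_)
    · rw [hhy, abs_mul]
      have h1 : |g y| ≤ A := by
        have := normC0_apply_le (ofRealC0 𝕜 g) y
        rwa [ofRealC0_apply', RCLike.norm_ofReal] at this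
      have h2 : |k y| ≤ 1 := abs_le.2 ⟨by linarith [hk0 y], hk1 y⟩
      nlinarith [abs_nonneg (g y), abs_nonneg (k y)]
    · rw [hhy] at hy
      have hky : k y ≠ 0 := fun h0 => hy (by rw [h0, mul_zero])
      by_contra hcon
      push_neg at hcon
      exact hky (hkU y (fun hmem => absurd hmem (not_lt.2 hcon.le)))
  have hsmvalue : ‖M.smul (ofRealC0 𝕜 h) s‖ ≤ normFormula M s x + ε₁ := by
    have : ofRealC0 𝕜 h = ofRealC0 𝕜 k * ofRealC0 𝕜 g := by
      rw [hhdef, ofRealC0_mul, mul_comm]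
    rw [this, M.mul_smul]
    calc ‖M.smul (ofRealC0 𝕜 k) (M.smul (ofRealC0 𝕜 g) s)‖
        ≤ ‖ofRealC0 𝕜 k‖ * ‖M.smul (ofRealC0 𝕜 g) s‖ := M.norm_smul_le _ _
      _ ≤ 1 * ‖M.smul (ofRealC0 𝕜 g) s‖ := by
          gcongr
          exact norm_ofRealC0_le_one hk0 hk1
      _ ≤ normFormula M s x + ε₁ := by rw [one_mul]; exact hgs.le
  have key : ‖M.smul (ofRealC0 𝕜 h * f) s‖
      ≤ ‖f x‖ * (normFormula M s x + ε₁) + A * δ * ‖s‖ := by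
    have hsplit : ofRealC0 𝕜 h * f
        = f x • ofRealC0 𝕜 h + (ofRealC0 𝕜 h * f - f x • ofRealC0 𝕜 h) := by abel
    calc ‖M.smul (ofRealC0 𝕜 h * f) s‖
        = ‖M.smul (f x • ofRealC0 𝕜 h) s
            + M.smul (ofRealC0 𝕜 h * f - f x • ofRealC0 𝕜 h) s‖ := by
          rw [← smul_add_fun, ← hsplit]
      _ ≤ ‖M.smul (f x • ofRealC0 𝕜 h) s‖
            + ‖M.smul (ofRealC0 𝕜 h * f - f x • ofRealC0 𝕜 h) s‖ := norm_add_le _ _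
      _ ≤ ‖f x‖ * (normFormula M s x + ε₁) + A * δ * ‖s‖ := by
          gcongr ?_ + ?_
          · rw [smul_smul_fun, norm_smul]
            exact mul_le_mul_of_nonneg_left hsmvalue (norm_nonneg _)
          · calc ‖M.smul (ofRealC0 𝕜 h * f - f x • ofRealC0 𝕜 h) s‖
                ≤ ‖ofRealC0 𝕜 h * f - f x • ofRealC0 𝕜 h‖ * ‖s‖ := M.norm_smul_le _ _
              _ ≤ A * δ * ‖s‖ := by gcongr
  have harith1 : ‖f x‖ * ε₁ ≤ ε / 2 := by
    have hD : (0:ℝ) < 2 * (‖f x‖ + 1) := by positivity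
    rw [hε₁def, ← mul_div_assoc, div_le_div_iff₀ hD two_pos]
    nlinarith [norm_nonneg (f x), hε.le]
  have harith2 : A * δ * ‖s‖ ≤ ε / 2 := by
    have hD : (0:ℝ) < 2 * (A + 1) * (‖s‖ + 1) := by positivity
    have hrw : A * δ * ‖s‖ = A * ‖s‖ * ε / (2 * (A + 1) * (‖s‖ + 1)) := by
      rw [hδdef]; ring
    rw [hrw, div_le_div_iff₀ hD two_pos]
    nlinarith [norm_nonneg s, hε.le, mul_nonneg hA (norm_nonneg s)]
  calc normFormula M (M.smul f s) x
      ≤ ‖f x‖ * (normFormula M s x + ε₁) + A * δ * ‖s‖ := step1.trans key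
    _ = ‖f x‖ * normFormula M s x + (‖f x‖ * ε₁ + A * δ * ‖s‖) := by ring
    _ ≤ ‖f x‖ * normFormula M s x + ε := by linarith

end Aux2

section Aux3

open Filter Set Topology ZeroAtInftyContinuousMap

variable {M : C0Module 𝕜 Ω Γ}

lemma le_normFormula_smul [LocallyCompactSpace Ω] [T2Space Ω]
    (M : C0Module 𝕜 Ω Γ) (f : C₀(Ω, 𝕜)) (s : Γ) (x : Ω) :
    ‖f x‖ * normFormula M s x ≤ normFormula M (M.smul f s) x := by
  refine le_of_forall_pos_le_add fun ε hε => ?_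
  obtain ⟨h, hh0, hhx, hhs⟩ :=
    exists_normFormula_lt M (M.smul f s) x (lt_add_of_pos_right _ (half_pos hε))
  set A := ‖ofRealC0 𝕜 h‖ with hAdef
  have hA : 0 ≤ A := norm_nonneg _
  set δ := ε / (2 * (A + 1) * (‖s‖ + 1)) with hδdef
  have hδ : 0 < δ := by positivity
  have hUopen : IsOpen {y | ‖f y - f x‖ < δ} :=
    isOpen_lt ((f.continuous.sub continuous_const).norm) continuous_const
  obtain ⟨k, hk0, hk1, hkx, hkU, -⟩ :=
    exists_c0_urysohn (isCompact_singleton (x := x)) hUopen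
      (singleton_subset_iff.2 (by simp [hδ]))
  set p := h * k with hpdef
  have hpy : ∀ y, p y = h y * k y := fun y => rfl
  have hp0 : ∀ y, 0 ≤ p y := fun y => mul_nonneg (hh0 y) (hk0 y)
  have hpx : p x = 1 := by rw [hpy, hhx, hkx x rfl, one_mul]
  have h1 : normFormula M s x ≤ ‖M.smul (ofRealC0 𝕜 p) s‖ := normFormula_le M s hp0 hpx
  have hE : ‖ofRealC0 𝕜 p * f - f x • ofRealC0 𝕜 p‖ ≤ A * δ := by
    refine norm_mul_sub_const_smul_le f p x hδ.le hA (fun y => ?_) (fun y hy => ?_)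
    · rw [hpy, abs_mul]
      have h1' : |h y| ≤ A := by
        have := normC0_apply_le (ofRealC0 𝕜 h) y
        rwa [ofRealC0_apply', RCLike.norm_ofReal] at this
      have h2 : |k y| ≤ 1 := abs_le.2 ⟨by linarith [hk0 y], hk1 y⟩
      nlinarith [abs_nonneg (h y), abs_nonneg (k y)]
    · rw [hpy] at hy
      have hky : k y ≠ 0 := fun h0 => hy (by rw [h0, mul_zero])
      by_contra hcon
      push_neg at hcon
      exact hky (hkU y (fun hmem => absurd hmem (not_lt.2 hcon.le)))
  have hmain : ‖M.smul (ofRealC0 𝕜 p * f) s‖ ≤ normFormula M (M.smul f s) x + ε / 2 := by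
    have hre : ofRealC0 𝕜 p * f = ofRealC0 𝕜 k * (ofRealC0 𝕜 h * f) := by
      rw [hpdef, ofRealC0_mul, mul_comm (ofRealC0 𝕜 h) (ofRealC0 𝕜 k), mul_assoc]
    rw [hre, M.mul_smul, M.mul_smul]
    calc ‖M.smul (ofRealC0 𝕜 k) (M.smul (ofRealC0 𝕜 h) (M.smul f s))‖
        ≤ ‖ofRealC0 𝕜 k‖ * ‖M.smul (ofRealC0 𝕜 h) (M.smul f s)‖ := M.norm_smul_le _ _
      _ ≤ 1 * ‖M.smul (ofRealC0 𝕜 h) (M.smul f s)‖ := by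
          gcongr
          exact norm_ofRealC0_le_one hk0 hk1
      _ ≤ normFormula M (M.smul f s) x + ε / 2 := by rw [one_mul]; exact hhs.le
  have harith : A * δ * ‖s‖ ≤ ε / 2 := by
    have hD : (0:ℝ) < 2 * (A + 1) * (‖s‖ + 1) := by positivity
    have hrw : A * δ * ‖s‖ = A * ‖s‖ * ε / (2 * (A + 1) * (‖s‖ + 1)) := by
      rw [hδdef]; ring
    rw [hrw, div_le_div_iff₀ hD two_pos]
    nlinarith [norm_nonneg s, hε.le, mul_nonneg hA (norm_nonneg s)]
  calc ‖f x‖ * normFormula M s x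
      ≤ ‖f x‖ * ‖M.smul (ofRealC0 𝕜 p) s‖ :=
        mul_le_mul_of_nonneg_left h1 (norm_nonneg _)
    _ = ‖M.smul (f x • ofRealC0 𝕜 p) s‖ := by rw [smul_smul_fun, norm_smul]
    _ = ‖M.smul (ofRealC0 𝕜 p * f) s‖ + (‖M.smul (f x • ofRealC0 𝕜 p) s‖
          - ‖M.smul (ofRealC0 𝕜 p * f) s‖) := by ring
    _ ≤ ‖M.smul (ofRealC0 𝕜 p * f) s‖
          + ‖M.smul (f x • ofRealC0 𝕜 p) s - M.smul (ofRealC0 𝕜 p * f) s‖ := by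
        gcongr
        exact norm_sub_norm_le _ _
    _ ≤ ‖M.smul (ofRealC0 𝕜 p * f) s‖ + A * δ * ‖s‖ := by
        gcongr
        rw [← smul_sub_fun]
        calc ‖M.smul (f x • ofRealC0 𝕜 p - ofRealC0 𝕜 p * f) s‖
            ≤ ‖f x • ofRealC0 𝕜 p - ofRealC0 𝕜 p * f‖ * ‖s‖ := M.norm_smul_le _ _
          _ ≤ A * δ * ‖s‖ := by
              rw [norm_sub_rev]
              gcongr
    _ ≤ normFormula M (M.smul f s) x + ε / 2 + ε / 2 := by gcongr
    _ = normFormula M (M.smul f s) x + ε := by ring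

lemma normFormula_usc [LocallyCompactSpace Ω] [T2Space Ω]
    (M : C0Module 𝕜 Ω Γ) (s : Γ) : UpperSemicontinuous (normFormula M s) := by
  intro x c hc
  obtain ⟨f, hf0, hfx, hfs⟩ := exists_normFormula_lt M s x hc
  have hV : IsOpen {y | ‖M.smul (ofRealC0 𝕜 f) s‖ < c * f y} :=
    isOpen_lt continuous_const (continuous_const.mul f.continuous)
  have hxV : x ∈ {y | ‖M.smul (ofRealC0 𝕜 f) s‖ < c * f y} := by
    simp only [mem_setOf_eq, hfx, mul_one]
    exact hfs
  filter_upwards [hV.mem_nhds hxV] with y hy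
  have hfy : 0 < f y := by
    by_contra hcon
    push_neg at hcon
    have hc0 : 0 < c := (norm_nonneg _).trans_lt hfs
    nlinarith [norm_nonneg (M.smul (ofRealC0 𝕜 f) s), hy]
  have hle : normFormula M s y ≤ ‖M.smul (ofRealC0 𝕜 ((f y)⁻¹ • f)) s‖ := by
    refine normFormula_le M s (fun z => ?_) ?_
    · have : ((f y)⁻¹ • f) z = (f y)⁻¹ * f z := by
        simp [ZeroAtInftyContinuousMap.coe_smul, smul_eq_mul]
      rw [this]
      exact mul_nonneg (inv_nonneg.2 hfy.le) (hf0 z)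
    · have : ((f y)⁻¹ • f) y = (f y)⁻¹ * f y := by
        simp [ZeroAtInftyContinuousMap.coe_smul, smul_eq_mul]
      rw [this, inv_mul_cancel₀ hfy.ne']
  rw [ofRealC0_smulr, smul_smul_fun, norm_smul, RCLike.norm_ofReal,
    abs_of_nonneg (inv_nonneg.2 hfy.le)] at hle
  calc normFormula M s y ≤ (f y)⁻¹ * ‖M.smul (ofRealC0 𝕜 f) s‖ := hle
    _ < c := by
        rw [inv_mul_eq_div, div_lt_iff₀ hfy]
        exact hy

/-- Truncation at height 1 inside `C₀`. -/
def capC0 (f : C₀(Ω, ℝ)) : C₀(Ω, ℝ) where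
  toFun := fun y => min (f y) 1
  continuous_toFun := f.continuous.min continuous_const
  zero_at_infty' := by
    have h : Filter.Tendsto (fun r : ℝ => min r 1) (nhds 0) (nhds 0) := by
      have := (continuous_id.min (continuous_const (y := (1:ℝ)))).tendsto 0
      simpa using this
    exact h.comp f.zero_at_infty'

lemma capC0_apply (f : C₀(Ω, ℝ)) (y : Ω) : capC0 f y = min (f y) 1 := rfl

lemma normFormula_subadd [LocallyCompactSpace Ω] [T2Space Ω]
    (M : C0Module 𝕜 Ω Γ) (hAM : M.IsAM) (s₁ s₂ : Γ) (x : Ω) :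
    normFormula M (s₁ + s₂) x ≤ normFormula M s₁ x + normFormula M s₂ x := by
  refine le_of_forall_pos_le_add fun ε hε => ?_
  obtain ⟨f₁, hf₁0, hf₁x, hf₁s⟩ :=
    exists_normFormula_lt M s₁ x (lt_add_of_pos_right _ (half_pos hε))
  obtain ⟨f₂, hf₂0, hf₂x, hf₂s⟩ :=
    exists_normFormula_lt M s₂ x (lt_add_of_pos_right _ (half_pos hε))
  set g₁ := capC0 f₁ with hg₁def
  set g₂ := capC0 f₂ with hg₂def
  have hg₁0 : ∀ y, 0 ≤ g₁ y := fun y => le_min (hf₁0 y) zero_le_one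
  have hg₂0 : ∀ y, 0 ≤ g₂ y := fun y => le_min (hf₂0 y) zero_le_one
  have hg₁1 : ∀ y, g₁ y ≤ 1 := fun y => min_le_right _ _
  have hg₂1 : ∀ y, g₂ y ≤ 1 := fun y => min_le_right _ _
  have hg₁x : g₁ x = 1 := by rw [capC0_apply, hf₁x, min_self]
  have hg₂x : g₂ x = 1 := by rw [capC0_apply, hf₂x, min_self]
  have hmono₁ : ‖M.smul (ofRealC0 𝕜 g₁) s₁‖ ≤ ‖M.smul (ofRealC0 𝕜 f₁) s₁‖ :=
    am_mono hAM hg₁0 hf₁0 (fun y => min_le_left _ _) s₁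
  have hmono₂ : ‖M.smul (ofRealC0 𝕜 g₂) s₂‖ ≤ ‖M.smul (ofRealC0 𝕜 f₂) s₂‖ :=
    am_mono hAM hg₂0 hf₂0 (fun y => min_le_left _ _) s₂
  set F := g₁ * g₂ with hFdef
  have hF0 : ∀ y, 0 ≤ F y := fun y => mul_nonneg (hg₁0 y) (hg₂0 y)
  have hFx : F x = 1 := by
    have : F x = g₁ x * g₂ x := rfl
    rw [this, hg₁x, hg₂x, one_mul]
  have hb₁ : ‖M.smul (ofRealC0 𝕜 F) s₁‖ ≤ ‖M.smul (ofRealC0 𝕜 g₁) s₁‖ := by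
    have : ofRealC0 𝕜 F = ofRealC0 𝕜 g₂ * ofRealC0 𝕜 g₁ := by
      rw [hFdef, ofRealC0_mul, mul_comm]
    rw [this, M.mul_smul]
    calc ‖M.smul (ofRealC0 𝕜 g₂) (M.smul (ofRealC0 𝕜 g₁) s₁)‖
        ≤ ‖ofRealC0 𝕜 g₂‖ * ‖M.smul (ofRealC0 𝕜 g₁) s₁‖ := M.norm_smul_le _ _
      _ ≤ 1 * ‖M.smul (ofRealC0 𝕜 g₁) s₁‖ := by
          gcongr; exact norm_ofRealC0_le_one hg₂0 hg₂1
      _ = ‖M.smul (ofRealC0 𝕜 g₁) s₁‖ := one_mul _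
  have hb₂ : ‖M.smul (ofRealC0 𝕜 F) s₂‖ ≤ ‖M.smul (ofRealC0 𝕜 g₂) s₂‖ := by
    have : ofRealC0 𝕜 F = ofRealC0 𝕜 g₁ * ofRealC0 𝕜 g₂ := by
      rw [hFdef, ofRealC0_mul]
    rw [this, M.mul_smul]
    calc ‖M.smul (ofRealC0 𝕜 g₁) (M.smul (ofRealC0 𝕜 g₂) s₂)‖
        ≤ ‖ofRealC0 𝕜 g₁‖ * ‖M.smul (ofRealC0 𝕜 g₂) s₂‖ := M.norm_smul_le _ _
      _ ≤ 1 * ‖M.smul (ofRealC0 𝕜 g₂) s₂‖ := by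
          gcongr; exact norm_ofRealC0_le_one hg₁0 hg₁1
      _ = ‖M.smul (ofRealC0 𝕜 g₂) s₂‖ := one_mul _
  calc normFormula M (s₁ + s₂) x
      ≤ ‖M.smul (ofRealC0 𝕜 F) (s₁ + s₂)‖ := normFormula_le M _ hF0 hFx
    _ = ‖M.smul (ofRealC0 𝕜 F) s₁ + M.smul (ofRealC0 𝕜 F) s₂‖ := by
        rw [map_add]
    _ ≤ ‖M.smul (ofRealC0 𝕜 F) s₁‖ + ‖M.smul (ofRealC0 𝕜 F) s₂‖ := norm_add_le _ _
    _ ≤ (normFormula M s₁ x + ε / 2) + (normFormula M s₂ x + ε / 2) := by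
        gcongr
        · exact (hb₁.trans hmono₁).trans hf₁s.le
        · exact (hb₂.trans hmono₂).trans hf₂s.le
    _ = normFormula M s₁ x + normFormula M s₂ x + ε := by ring

end Aux3

section Aux4

open Filter Set Topology ZeroAtInftyContinuousMap

variable {M : C0Module 𝕜 Ω Γ}

lemma hasCompactSupport_of_subset [T2Space Ω] {g : Ω → ℝ} {K : Set Ω} (hK : IsCompact K)
    (h : Function.support g ⊆ K) : HasCompactSupport g :=
  HasCompactSupport.of_support_subset_isCompact hK h

/-- Existence of approximate units from nondegeneracy. -/
lemma exists_approx_unit [LocallyCompactSpace Ω] [T2Space Ω]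
    (M : C0Module 𝕜 Ω Γ) (hM : M.Nondegenerate) (s : Γ) {ε : ℝ} (hε : 0 < ε) :
    ∃ e : C₀(Ω, ℝ), (∀ y, 0 ≤ e y) ∧ (∀ y, e y ≤ 1) ∧ HasCompactSupport ⇑e ∧
      ‖M.smul (ofRealC0 𝕜 e) s - s‖ < ε := by
  set P : Γ → Prop := fun t => ∀ ε' : ℝ, 0 < ε' → ∃ e : C₀(Ω, ℝ),
    (∀ y, 0 ≤ e y) ∧ (∀ y, e y ≤ 1) ∧ HasCompactSupport ⇑e ∧
      ‖M.smul (ofRealC0 𝕜 e) t - t‖ < ε' with hPdef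
  have key : ∀ (t : Γ) (h1 h2 : C₀(Ω, ℝ)),
      M.smul (ofRealC0 𝕜 (h1 + h2 - h1 * h2)) t - t
        = (M.smul (ofRealC0 𝕜 h1) t - t)
          - M.smul (ofRealC0 𝕜 h2) (M.smul (ofRealC0 𝕜 h1) t - t) := by
    intro t h1 h2
    rw [ofRealC0_sub, ofRealC0_add, ofRealC0_mul, smul_sub_fun, smul_add_fun, map_sub,
      mul_comm (ofRealC0 𝕜 h1) (ofRealC0 𝕜 h2), M.mul_smul]
    abel
  have hspan : ∀ t ∈ Submodule.span 𝕜
      {x : Γ | ∃ (f : C₀(Ω, 𝕜)) (u : Γ), M.smul f u = x}, P t := by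
    intro t ht
    induction ht using Submodule.span_induction with
    | mem t' ht' =>
      obtain ⟨f, u, rfl⟩ := ht'
      intro ε' hε'
      set δ := ε' / (2 * (‖u‖ + 1)) with hδdef
      have hδ : 0 < δ := by positivity
      have hco : {y | ‖f y‖ < δ} ∈ cocompact Ω := by
        have h := (zero_at_infty f) (Metric.ball_mem_nhds (0 : 𝕜) hδ)
        refine Filter.mem_of_superset h ?_
        intro y hy
        simpa [Metric.mem_ball, dist_zero_right] using hy
      obtain ⟨K, hKc, hKsub⟩ := mem_cocompact.1 hco
      obtain ⟨e, he0, he1, heK, -, hecs⟩ := exists_c0_urysohn hKc isOpen_univ (subset_univ _)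
      refine ⟨e, he0, he1, hecs, ?_⟩
      have hdiff : M.smul (ofRealC0 𝕜 e) (M.smul f u) - M.smul f u
          = M.smul (ofRealC0 𝕜 e * f - f) u := by
        rw [smul_sub_fun, M.mul_smul]
      have hbound : ‖ofRealC0 𝕜 e * f - f‖ ≤ δ := by
        apply normC0_le hδ.le
        intro y
        have happ : (ofRealC0 𝕜 e * f - f) y = ((e y : 𝕜) - 1) * f y := by
          simp only [ZeroAtInftyContinuousMap.coe_sub, Pi.sub_apply,
            ZeroAtInftyContinuousMap.coe_mul, Pi.mul_apply, ofRealC0_apply']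
          ring
        rw [happ, norm_mul]
        by_cases hy : y ∈ K
        · rw [heK y hy]
          simp [hδ.le]
        · have h1 : ‖f y‖ < δ := hKsub (mem_compl hy)
          have h2 : ‖(e y : 𝕜) - 1‖ ≤ 1 := by
            have : ((e y : ℝ) : 𝕜) - 1 = ((e y - 1 : ℝ) : 𝕜) := by push_cast; ring
            rw [this, RCLike.norm_ofReal]
            rw [abs_le]
            constructor
            · linarith [he0 y]
            · linarith [he1 y]
          calc ‖(e y : 𝕜) - 1‖ * ‖f y‖ ≤ 1 * δ :=
                mul_le_mul h2 h1.le (norm_nonneg _) zero_le_one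
            _ = δ := one_mul _
      calc ‖M.smul (ofRealC0 𝕜 e) (M.smul f u) - M.smul f u‖
          = ‖M.smul (ofRealC0 𝕜 e * f - f) u‖ := by rw [hdiff]
        _ ≤ ‖ofRealC0 𝕜 e * f - f‖ * ‖u‖ := M.norm_smul_le _ _
        _ ≤ δ * (‖u‖ + 1) := by
            apply mul_le_mul hbound (by linarith) (norm_nonneg _) hδ.le
        _ = ε' / 2 := by
            rw [hδdef]
            field_simp
        _ < ε' := by linarith
    | zero =>
      intro ε' hε'
      refine ⟨0, by simp [ZeroAtInftyContinuousMap.coe_zero],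
        by simp [ZeroAtInftyContinuousMap.coe_zero],
        hasCompactSupport_of_subset isCompact_empty
          (by simp [ZeroAtInftyContinuousMap.coe_zero]), ?_⟩
      rw [ofRealC0_zero, smul_zero_fun]
      simpa using hε'
    | add a b ha hb hPa hPb =>
      intro ε' hε'
      obtain ⟨e₁, he₁0, he₁1, he₁cs, he₁⟩ := hPa (ε' / 4) (by positivity)
      obtain ⟨e₂, he₂0, he₂1, he₂cs, he₂⟩ := hPb (ε' / 4) (by positivity)
      set e := e₁ + e₂ - e₁ * e₂ with hedef
      have hey : ∀ y, e y = e₁ y + e₂ y - e₁ y * e₂ y := fun y => rfl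
      have he0 : ∀ y, 0 ≤ e y := fun y => by
        rw [hey]; nlinarith [he₁0 y, he₂0 y, he₁1 y, he₂1 y]
      have he1 : ∀ y, e y ≤ 1 := fun y => by
        rw [hey]; nlinarith [he₁0 y, he₂0 y, he₁1 y, he₂1 y]
      have hecs : HasCompactSupport ⇑e := by
        apply hasCompactSupport_of_subset (he₁cs.union he₂cs)
        intro y hy
        rw [Function.mem_support, hey] at hy
        by_cases h1 : e₁ y = 0
        · by_cases h2 : e₂ y = 0
          · exact absurd (by rw [h1, h2]; ring) hy
          · exact Or.inr (subset_tsupport _ h2)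
        · exact Or.inl (subset_tsupport _ h1)
      have bound1 : ‖M.smul (ofRealC0 𝕜 e) a - a‖ < ε' / 2 := by
        rw [hedef, key]
        calc ‖(M.smul (ofRealC0 𝕜 e₁) a - a)
              - M.smul (ofRealC0 𝕜 e₂) (M.smul (ofRealC0 𝕜 e₁) a - a)‖
            ≤ ‖M.smul (ofRealC0 𝕜 e₁) a - a‖
              + ‖M.smul (ofRealC0 𝕜 e₂) (M.smul (ofRealC0 𝕜 e₁) a - a)‖ := norm_sub_le _ _
          _ ≤ ‖M.smul (ofRealC0 𝕜 e₁) a - a‖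
              + 1 * ‖M.smul (ofRealC0 𝕜 e₁) a - a‖ := by
              gcongr
              calc ‖M.smul (ofRealC0 𝕜 e₂) (M.smul (ofRealC0 𝕜 e₁) a - a)‖
                  ≤ ‖ofRealC0 𝕜 e₂‖ * ‖M.smul (ofRealC0 𝕜 e₁) a - a‖ := M.norm_smul_le _ _
                _ ≤ 1 * ‖M.smul (ofRealC0 𝕜 e₁) a - a‖ := by
                    gcongr; exact norm_ofRealC0_le_one he₂0 he₂1
          _ < ε' / 2 := by rw [one_mul]; linarith
      have bound2 : ‖M.smul (ofRealC0 𝕜 e) b - b‖ < ε' / 2 := by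
        have hcomm : e = e₂ + e₁ - e₂ * e₁ := by
          rw [hedef, add_comm, mul_comm]
        rw [hcomm, key]
        calc ‖(M.smul (ofRealC0 𝕜 e₂) b - b)
              - M.smul (ofRealC0 𝕜 e₁) (M.smul (ofRealC0 𝕜 e₂) b - b)‖
            ≤ ‖M.smul (ofRealC0 𝕜 e₂) b - b‖
              + ‖M.smul (ofRealC0 𝕜 e₁) (M.smul (ofRealC0 𝕜 e₂) b - b)‖ := norm_sub_le _ _
          _ ≤ ‖M.smul (ofRealC0 𝕜 e₂) b - b‖
              + 1 * ‖M.smul (ofRealC0 𝕜 e₂) b - b‖ := by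
              gcongr
              calc ‖M.smul (ofRealC0 𝕜 e₁) (M.smul (ofRealC0 𝕜 e₂) b - b)‖
                  ≤ ‖ofRealC0 𝕜 e₁‖ * ‖M.smul (ofRealC0 𝕜 e₂) b - b‖ := M.norm_smul_le _ _
                _ ≤ 1 * ‖M.smul (ofRealC0 𝕜 e₂) b - b‖ := by
                    gcongr; exact norm_ofRealC0_le_one he₁0 he₁1
          _ < ε' / 2 := by rw [one_mul]; linarith
      refine ⟨e, he0, he1, hecs, ?_⟩
      have hsplit : M.smul (ofRealC0 𝕜 e) (a + b) - (a + b)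
          = (M.smul (ofRealC0 𝕜 e) a - a) + (M.smul (ofRealC0 𝕜 e) b - b) := by
        rw [map_add]; abel
      rw [hsplit]
      calc ‖(M.smul (ofRealC0 𝕜 e) a - a) + (M.smul (ofRealC0 𝕜 e) b - b)‖
          ≤ ‖M.smul (ofRealC0 𝕜 e) a - a‖ + ‖M.smul (ofRealC0 𝕜 e) b - b‖ := norm_add_le _ _
        _ < ε' / 2 + ε' / 2 := add_lt_add bound1 bound2
        _ = ε' := by ring
    | smul c a ha hPa =>
      intro ε' hε'
      obtain ⟨e, he0, he1, hecs, he⟩ := hPa (ε' / (‖c‖ + 1)) (by positivity)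
      refine ⟨e, he0, he1, hecs, ?_⟩
      have hsplit : M.smul (ofRealC0 𝕜 e) (c • a) - c • a
          = c • (M.smul (ofRealC0 𝕜 e) a - a) := by
        rw [map_smul, smul_sub]
      rw [hsplit, norm_smul]
      calc ‖c‖ * ‖M.smul (ofRealC0 𝕜 e) a - a‖
          ≤ (‖c‖ + 1) * ‖M.smul (ofRealC0 𝕜 e) a - a‖ := by
            apply mul_le_mul_of_nonneg_right (by linarith) (norm_nonneg _)
        _ < (‖c‖ + 1) * (ε' / (‖c‖ + 1)) := by
            apply mul_lt_mul_of_pos_left he (by positivity)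
        _ = ε' := by field_simp
  obtain ⟨b, hbmem, hbdist⟩ := Metric.mem_closure_iff.1 (hM s) (ε / 3) (by positivity)
  obtain ⟨e, he0, he1, hecs, he⟩ := hspan b hbmem (ε / 3) (by positivity)
  refine ⟨e, he0, he1, hecs, ?_⟩
  have hsplit : M.smul (ofRealC0 𝕜 e) s - s
      = M.smul (ofRealC0 𝕜 e) (s - b) + (M.smul (ofRealC0 𝕜 e) b - b) + (b - s) := by
    rw [map_sub]; abel
  rw [hsplit]
  have h1 : ‖M.smul (ofRealC0 𝕜 e) (s - b)‖ < ε / 3 := by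
    calc ‖M.smul (ofRealC0 𝕜 e) (s - b)‖
        ≤ ‖ofRealC0 𝕜 e‖ * ‖s - b‖ := M.norm_smul_le _ _
      _ ≤ 1 * ‖s - b‖ := by
          apply mul_le_mul_of_nonneg_right (norm_ofRealC0_le_one he0 he1) (norm_nonneg _)
      _ = dist s b := by rw [one_mul, dist_eq_norm]
      _ < ε / 3 := hbdist
  have h3 : ‖b - s‖ < ε / 3 := by
    rw [norm_sub_rev, ← dist_eq_norm]
    exact hbdist
  calc ‖M.smul (ofRealC0 𝕜 e) (s - b) + (M.smul (ofRealC0 𝕜 e) b - b) + (b - s)‖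
      ≤ ‖M.smul (ofRealC0 𝕜 e) (s - b)‖ + ‖M.smul (ofRealC0 𝕜 e) b - b‖ + ‖b - s‖ :=
        norm_add₃_le
    _ < ε / 3 + ε / 3 + ε / 3 := by
        apply add_lt_add (add_lt_add h1 he) h3
    _ = ε := by ring

lemma normFormula_zero_at_infty [LocallyCompactSpace Ω] [T2Space Ω]
    (M : C0Module 𝕜 Ω Γ) (hM : M.Nondegenerate) (s : Γ) {ε : ℝ} (hε : 0 < ε) :
    ∃ K : Set Ω, IsCompact K ∧ ∀ x ∉ K, normFormula M s x ≤ ε := by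
  obtain ⟨e, he0, he1, hecs, hes⟩ := exists_approx_unit M hM s hε
  refine ⟨tsupport ⇑e, hecs, fun x hx => ?_⟩
  obtain ⟨f, hf0, hf1, hfx, hfU, -⟩ := exists_c0_urysohn (isCompact_singleton (x := x))
    (isOpen_compl_iff.2 (isClosed_tsupport _)) (singleton_subset_iff.2 hx)
  have hfe : f * e = 0 := by
    ext y
    show f y * e y = 0
    by_cases hy : y ∈ tsupport ⇑e
    · rw [hfU y (by simpa using hy), zero_mul]
    · rw [image_eq_zero_of_notMem_tsupport hy, mul_zero]
  have hfs : ‖M.smul (ofRealC0 𝕜 f) s‖ ≤ ε := by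
    have hzero : M.smul (ofRealC0 𝕜 f) (M.smul (ofRealC0 𝕜 e) s) = 0 := by
      rw [← M.mul_smul, ← ofRealC0_mul, hfe, ofRealC0_zero, smul_zero_fun]
    have hsplit : M.smul (ofRealC0 𝕜 f) s
        = M.smul (ofRealC0 𝕜 f) (s - M.smul (ofRealC0 𝕜 e) s) := by
      rw [map_sub, hzero, sub_zero]
    rw [hsplit]
    calc ‖M.smul (ofRealC0 𝕜 f) (s - M.smul (ofRealC0 𝕜 e) s)‖
        ≤ ‖ofRealC0 𝕜 f‖ * ‖s - M.smul (ofRealC0 𝕜 e) s‖ := M.norm_smul_le _ _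
      _ ≤ 1 * ε := by
          apply mul_le_mul (norm_ofRealC0_le_one hf0 hf1) _ (norm_nonneg _) zero_le_one
          rw [norm_sub_rev]
          exact hes.le
      _ = ε := one_mul _
  exact (normFormula_le M s hf0 (hfx x rfl)).trans hfs

end Aux4

section Aux5

open Filter Set Topology ZeroAtInftyContinuousMap

variable {M : C0Module 𝕜 Ω Γ}

lemma supC0_apply (f g : C₀(Ω, ℝ)) (y : Ω) : supC0 f g y = max (f y) (g y) := rfl

lemma foldr_nonneg (l : List (C₀(Ω, ℝ))) (hl : ∀ g ∈ l, ∀ y, 0 ≤ g y) (y : Ω) :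
    0 ≤ (l.foldr supC0 0) y := by
  induction l with
  | nil => simp [List.foldr_nil, ZeroAtInftyContinuousMap.coe_zero]
  | cons a l ih =>
    rw [List.foldr_cons, supC0_apply]
    exact le_max_of_le_left (hl a (List.mem_cons_self) y)

lemma foldr_ge (l : List (C₀(Ω, ℝ))) {g : C₀(Ω, ℝ)} (hg : g ∈ l) (y : Ω) :
    g y ≤ (l.foldr supC0 0) y := by
  induction l with
  | nil => exact absurd hg List.not_mem_nil
  | cons a l ih =>
    rw [List.foldr_cons, supC0_apply]
    rcases List.mem_cons.1 hg with h | h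
    · subst h; exact le_max_left _ _
    · exact (ih h).trans (le_max_right _ _)

lemma foldr_norm_le (hAM : M.IsAM) (s : Γ) {b : ℝ} (hb : 0 ≤ b) (l : List (C₀(Ω, ℝ)))
    (h0 : ∀ g ∈ l, ∀ y, 0 ≤ g y) (hn : ∀ g ∈ l, ‖M.smul (ofRealC0 𝕜 g) s‖ ≤ b) :
    ‖M.smul (ofRealC0 𝕜 (l.foldr supC0 0)) s‖ ≤ b := by
  induction l with
  | nil =>
    rw [List.foldr_nil, ofRealC0_zero, smul_zero_fun, norm_zero]
    exact hb
  | cons a l ih =>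
    rw [List.foldr_cons]
    rw [hAM a (l.foldr supC0 0) (fun y => h0 a (List.mem_cons_self) y)
      (foldr_nonneg l (fun g hg => h0 g (List.mem_cons_of_mem a hg)) ) s]
    exact max_le (hn a (List.mem_cons_self))
      (ih (fun g hg => h0 g (List.mem_cons_of_mem a hg))
        (fun g hg => hn g (List.mem_cons_of_mem a hg)))

lemma normFormula_sup_eq_norm [LocallyCompactSpace Ω] [T2Space Ω]
    (M : C0Module 𝕜 Ω Γ) (hM : M.Nondegenerate) (hAM : M.IsAM) (s : Γ) :
    (⨆ x : Ω, normFormula M s x) = ‖s‖ := by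
  set c := ⨆ x : Ω, normFormula M s x with hcdef
  have hbdd : BddAbove (Set.range fun x => normFormula M s x) :=
    ⟨‖s‖, by rintro r ⟨x, rfl⟩; exact normFormula_le_norm M s x⟩
  have hle : c ≤ ‖s‖ := Real.iSup_le (fun x => normFormula_le_norm M s x) (norm_nonneg s)
  refine le_antisymm hle ?_
  have hxc : ∀ x, normFormula M s x ≤ c := fun x => le_ciSup hbdd x
  have main : ∀ ε : ℝ, ε ∈ Set.Ioo (0:ℝ) 1 → ‖s‖ ≤ (1 - ε)⁻¹ * (c + ε) + ε := by
    rintro ε ⟨hε0, hε1⟩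
    obtain ⟨e, he0, he1, hecs, hes⟩ := exists_approx_unit M hM s hε0
    have hex : ∀ x : Ω, ∃ f : C₀(Ω, ℝ), (∀ y, 0 ≤ f y) ∧ f x = 1 ∧
        ‖M.smul (ofRealC0 𝕜 f) s‖ < c + ε :=
      fun x => exists_normFormula_lt M s x ((hxc x).trans_lt (lt_add_of_pos_right _ hε0))
    choose F hF0 hF1 hFs using hex
    set L := tsupport ⇑e with hLdef
    have hU : ∀ x ∈ L, {y | 1 - ε < F x y} ∈ 𝓝 x := by
      intro x _
      have hopen : IsOpen {y | 1 - ε < F x y} := isOpen_lt continuous_const (F x).continuous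
      apply hopen.mem_nhds
      show 1 - ε < F x x
      rw [hF1 x]; linarith
    obtain ⟨t, htL, hcover⟩ :=
      (hecs : IsCompact (tsupport ⇑e)).elim_nhds_subcover (fun x => {y | 1 - ε < F x y}) hU
    set G := t.toList.map F with hGdef
    set Fs := G.foldr supC0 0 with hFsdef
    have hG0 : ∀ g ∈ G, ∀ y, 0 ≤ g y := by
      intro g hg
      obtain ⟨x, -, rfl⟩ := List.mem_map.1 hg
      exact hF0 x
    have hFs0 : ∀ y, 0 ≤ Fs y := foldr_nonneg G hG0
    have hc0 : 0 ≤ c := Real.iSup_nonneg fun x => normFormula_nonneg M s x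
    have hFsb : ‖M.smul (ofRealC0 𝕜 Fs) s‖ ≤ c + ε := by
      refine foldr_norm_le hAM s (by positivity) G hG0 ?_
      intro g hg
      obtain ⟨x, -, rfl⟩ := List.mem_map.1 hg
      exact (hFs x).le
    have hFsL : ∀ y ∈ L, 1 - ε < Fs y := by
      intro y hy
      obtain ⟨x, hxt, hyU⟩ := Set.mem_iUnion₂.1 (hcover hy)
      exact lt_of_lt_of_le hyU
        (foldr_ge G (List.mem_map.2 ⟨x, Finset.mem_toList.2 hxt, rfl⟩) y)
    have h1ε : 0 < 1 - ε := by linarith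
    have hmono : ∀ y, e y ≤ ((1 - ε)⁻¹ • Fs) y := by
      intro y
      have happ : ((1 - ε)⁻¹ • Fs) y = (1 - ε)⁻¹ * Fs y := rfl
      rw [happ]
      by_cases hy : y ∈ L
      · have h2 := hFsL y hy
        calc e y ≤ 1 := he1 y
          _ ≤ (1 - ε)⁻¹ * Fs y := by
              have h4 := mul_le_mul_of_nonneg_left h2.le (inv_nonneg.2 h1ε.le)
              rwa [inv_mul_cancel₀ h1ε.ne'] at h4
      · rw [image_eq_zero_of_notMem_tsupport hy]
        exact mul_nonneg (inv_nonneg.2 h1ε.le) (hFs0 y)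
    have hsm : ‖M.smul (ofRealC0 𝕜 e) s‖ ≤ (1 - ε)⁻¹ * (c + ε) := by
      calc ‖M.smul (ofRealC0 𝕜 e) s‖
          ≤ ‖M.smul (ofRealC0 𝕜 ((1 - ε)⁻¹ • Fs)) s‖ :=
            am_mono hAM he0 (fun y => mul_nonneg (inv_nonneg.2 h1ε.le) (hFs0 y)) hmono s
        _ = (1 - ε)⁻¹ * ‖M.smul (ofRealC0 𝕜 Fs) s‖ := by
            rw [ofRealC0_smulr, smul_smul_fun, norm_smul, RCLike.norm_ofReal,
              abs_of_nonneg (inv_nonneg.2 h1ε.le)]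
        _ ≤ (1 - ε)⁻¹ * (c + ε) := mul_le_mul_of_nonneg_left hFsb (inv_nonneg.2 h1ε.le)
    have htri : ‖s‖ ≤ ‖M.smul (ofRealC0 𝕜 e) s‖ + ‖M.smul (ofRealC0 𝕜 e) s - s‖ := by
      have h := norm_sub_le (M.smul (ofRealC0 𝕜 e) s) (M.smul (ofRealC0 𝕜 e) s - s)
      simpa using h
    linarith
  have htend : Tendsto (fun ε : ℝ => (1 - ε)⁻¹ * (c + ε) + ε) (𝓝[>] 0)
      (𝓝 ((1 - 0)⁻¹ * (c + 0) + 0)) := by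
    apply Tendsto.mono_left _ nhdsWithin_le_nhds
    have hcont : ContinuousAt (fun ε : ℝ => (1 - ε)⁻¹ * (c + ε) + ε) 0 := by
      refine ContinuousAt.add (ContinuousAt.mul ?_ ?_) continuousAt_id
      · exact (continuousAt_const.sub continuousAt_id).inv₀ (by norm_num)
      · exact continuousAt_const.add continuousAt_id
    exact hcont.tendsto
  have hval : (1 - (0:ℝ))⁻¹ * (c + 0) + 0 = c := by norm_num
  rw [hval] at htend
  refine ge_of_tendsto htend ?_
  filter_upwards [Ioo_mem_nhdsGT_of_mem (Set.mem_Ico.2 ⟨le_refl (0:ℝ), zero_lt_one⟩)] with ε hε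
  exact main ε hε

end Aux5

section Aux6

open Filter Set Topology ZeroAtInftyContinuousMap

variable {M : C0Module 𝕜 Ω Γ} {N : Γ → Ω → ℝ}

lemma U0_bddAbove (hN : IsU0Norm M N) (s : Γ) : BddAbove (Set.range (N s)) := by
  obtain ⟨K, hKc, hK1⟩ := hN.zero_at_infty s 1 one_pos
  have hU : ∀ x ∈ K, {y | N s y < N s x + 1} ∈ 𝓝 x := fun x _ =>
    hN.upperSemicontinuous s x (N s x + 1) (lt_add_one _)
  obtain ⟨t, -, hcover⟩ := hKc.elim_nhds_subcover _ hU
  set B : ℕ := t.sup fun x => ⌈N s x + 1⌉₊ with hB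
  refine ⟨max (B : ℝ) 1, ?_⟩
  rintro r ⟨y, rfl⟩
  by_cases hy : y ∈ K
  · obtain ⟨x, hxt, hxy⟩ := Set.mem_iUnion₂.1 (hcover hy)
    have h1 : N s y < N s x + 1 := hxy
    have h2 : N s x + 1 ≤ (⌈N s x + 1⌉₊ : ℝ) := Nat.le_ceil _
    have h3' : ⌈N s x + 1⌉₊ ≤ B := Finset.le_sup (f := fun x => ⌈N s x + 1⌉₊) hxt
    have h3 : ((⌈N s x + 1⌉₊ : ℕ) : ℝ) ≤ (B : ℝ) := Nat.cast_le.2 h3'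
    exact le_max_of_le_left (by linarith)
  · exact le_max_of_le_right (hK1 y hy)

lemma real_iSup_max {g h : Ω → ℝ} (hg0 : ∀ x, 0 ≤ g x) (hh0 : ∀ x, 0 ≤ h x)
    (hg : BddAbove (Set.range g)) (hh : BddAbove (Set.range h)) :
    (⨆ x, max (g x) (h x)) = max (⨆ x, g x) (⨆ x, h x) := by
  obtain ⟨a, ha⟩ := hg
  obtain ⟨b, hb⟩ := hh
  have hmb : BddAbove (Set.range fun x => max (g x) (h x)) := by
    refine ⟨max a b, ?_⟩
    rintro r ⟨x, rfl⟩
    exact max_le_max (ha ⟨x, rfl⟩) (hb ⟨x, rfl⟩)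
  apply le_antisymm
  · exact Real.iSup_le (fun x => max_le_max (le_ciSup ⟨a, ha⟩ x) (le_ciSup ⟨b, hb⟩ x))
      (le_max_of_le_left (Real.iSup_nonneg hg0))
  · refine max_le ?_ ?_
    · exact Real.iSup_le (fun x => (le_max_left (g x) (h x)).trans (le_ciSup hmb x))
        (Real.iSup_nonneg fun x => le_max_of_le_left (hg0 x))
    · exact Real.iSup_le (fun x => (le_max_right (g x) (h x)).trans (le_ciSup hmb x))
        (Real.iSup_nonneg fun x => le_max_of_le_left (hg0 x))

lemma isAM_of_u0norm (hN : IsU0Norm M N) : M.IsAM := by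
  intro f₁ f₂ hf₁ hf₂ s
  have hpt : ∀ x, N (M.smul (ofRealC0 𝕜 (supC0 f₁ f₂)) s) x
      = max (N (M.smul (ofRealC0 𝕜 f₁) s) x) (N (M.smul (ofRealC0 𝕜 f₂) s) x) := by
    intro x
    rw [hN.smul_eq, hN.smul_eq, hN.smul_eq, ofRealC0_apply', ofRealC0_apply',
      ofRealC0_apply', RCLike.norm_ofReal, RCLike.norm_ofReal, RCLike.norm_ofReal,
      supC0_apply, abs_of_nonneg (le_max_of_le_left (hf₁ x)), abs_of_nonneg (hf₁ x),
      abs_of_nonneg (hf₂ x)]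
    exact max_mul_of_nonneg _ _ (hN.nonneg s x)
  rw [← hN.sup_eq_norm (M.smul (ofRealC0 𝕜 (supC0 f₁ f₂)) s),
    ← hN.sup_eq_norm (M.smul (ofRealC0 𝕜 f₁) s), ← hN.sup_eq_norm (M.smul (ofRealC0 𝕜 f₂) s)]
  calc (⨆ x, N (M.smul (ofRealC0 𝕜 (supC0 f₁ f₂)) s) x)
      = ⨆ x, max (N (M.smul (ofRealC0 𝕜 f₁) s) x) (N (M.smul (ofRealC0 𝕜 f₂) s) x) := by
        apply congrArg
        ext x
        exact hpt x
    _ = max (⨆ x, N (M.smul (ofRealC0 𝕜 f₁) s) x) (⨆ x, N (M.smul (ofRealC0 𝕜 f₂) s) x) :=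
        real_iSup_max (hN.nonneg _) (hN.nonneg _) (U0_bddAbove hN _) (U0_bddAbove hN _)

end Aux6

/-- A nondegenerate Banach module over `C₀(Ω)` satisfies the AM-identity iff
it admits a `U₀(Ω)`-valued norm; in that case the explicit infimum formula defines one. -/
theorem isAM_iff_exists_u0Norm
    [LocallyCompactSpace Ω] [T2Space Ω] [CompleteSpace Γ]
    (M : C0Module 𝕜 Ω Γ) (hM : M.Nondegenerate) :
    (M.IsAM ↔ ∃ N : Γ → Ω → ℝ, IsU0Norm M N) ∧
    (M.IsAM → IsU0Norm M (normFormula M)) := by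
  have main : M.IsAM → IsU0Norm M (normFormula M) := by
    intro hAM
    exact
      { nonneg := fun s x => normFormula_nonneg M s x
        upperSemicontinuous := fun s => normFormula_usc M s
        zero_at_infty := fun s ε hε => normFormula_zero_at_infty M hM s hε
        sup_eq_norm := fun s => normFormula_sup_eq_norm M hM hAM s
        smul_eq := fun f s x =>
          le_antisymm (normFormula_smul_le M f s x) (le_normFormula_smul M f s x)
        subadd := fun s₁ s₂ x => normFormula_subadd M hAM s₁ s₂ x }
  exact ⟨⟨fun hAM => ⟨normFormula M, main hAM⟩, fun ⟨N, hN⟩ => isAM_of_u0norm hN⟩, main⟩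

end
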